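/- arXiv:1201.1052 — 5 statements merged into one kernel-verified Lean document; each statement's English description precedes it below -/
import Mathlib

section
/- If (Δ_j)_{j≥0} are i.i.d. nonnegative-integer-valued random variables, then P(i ∈ R) = ∏_{j=1}^{i} (1 - P(Δ_0 ≥ j)), where R = ℤ_{≥0} \ ⋃_{j≥0}(j, j+Δ_j]. -/
open MeasureTheory ProbabilityTheory

/-! The event `i ∈ R` says `Δ j < i - j` for every `j < i`. By independence its probability is
the product of the probabilities of these events, and since the `Δ j` share the law of `Δ 0`,
the factor for `j` is `1 - P(Δ 0 ≥ i - j)`; reindexing by `i - j` gives the product over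
`1 ≤ j ≤ i`. -/

theorem Finset.prod_range_sub_eq_prod_Icc {M : Type*} [CommMonoid M] (f : ℕ → M) (n : ℕ) :
    ∏ j ∈ Finset.range n, f (n - j) = ∏ j ∈ Finset.Icc 1 n, f j := by
  refine Finset.prod_nbij' (n - ·) (n - ·) ?_ ?_ ?_ ?_ fun _ _ => rfl <;>
    simp only [Finset.mem_range, Finset.mem_Icc] <;> omega

theorem setOf_forall_add_lt_eq_biInter {Ω : Type*} (X : ℕ → Ω → ℕ) (i : ℕ) :
    {ω | ∀ j < i, j + X j ω < i} = ⋂ j ∈ Finset.range i, X j ⁻¹' Set.Iio (i - j) := by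
  ext ω
  simp only [Set.mem_ofPred_eq, Set.mem_iInter, Finset.mem_range, Set.mem_preimage, Set.mem_Iio]
  exact forall₂_congr fun j hj => by omega

theorem measure_preimage_Iio_eq_one_sub {Ω : Type*} [MeasurableSpace Ω] {μ : Measure Ω}
    [IsProbabilityMeasure μ] {X Y : Ω → ℕ} (hXY : IdentDistrib X Y μ μ) (k : ℕ) :
    μ (X ⁻¹' Set.Iio k) = 1 - μ {ω | k ≤ Y ω} := by
  rw [hXY.measure_mem_eq measurableSet_Iio, ← Set.compl_Ici, Set.preimage_compl]
  exact prob_compl_eq_one_sub₀ (hXY.aemeasurable_snd.nullMeasurableSet_preimage measurableSet_Ici)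

/-- If `(Δ_j)_{j≥0}` are i.i.d. nonnegative-integer random variables and
`R = ℤ_{≥0} \ ⋃_j (j, j+Δ_j]` (i.e. `i ∈ R` iff `j + Δ_j < i` for all `j < i`), then
`P(i ∈ R) = ∏_{j=1}^{i} (1 - P(Δ_0 ≥ j))`. -/
theorem stmt3 {Ω : Type*} [MeasureSpace Ω] [IsProbabilityMeasure (ℙ : Measure Ω)]
    (Δ : ℕ → Ω → ℕ) (hmeas : ∀ j, Measurable (Δ j))
    (hindep : iIndepFun Δ ℙ)
    (hident : ∀ j, Measure.map (Δ j) ℙ = Measure.map (Δ 0) ℙ)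
    (i : ℕ) :
    ℙ {ω | ∀ j < i, j + Δ j ω < i}
      = ∏ j ∈ Finset.Icc 1 i, (1 - ℙ {ω | j ≤ Δ 0 ω}) := by
  have hlaw (j : ℕ) : IdentDistrib (Δ j) (Δ 0) ℙ ℙ :=
    ⟨(hmeas j).aemeasurable, (hmeas 0).aemeasurable, hident j⟩
  rw [setOf_forall_add_lt_eq_biInter,
    hindep.measure_inter_preimage_eq_mul _ fun _ _ => measurableSet_Iio,
    ← Finset.prod_range_sub_eq_prod_Icc]
  exact Finset.prod_congr rfl fun j _ => measure_preimage_Iio_eq_one_sub (hlaw j) (i - j)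
end

section
/- Let (Δ_j)_{j≥0} be i.i.d. nonnegative-integer random variables with P(Δ_0 ≥ m) ~ 2/m as m→∞ and P(Δ_0 = 0) > 0. Then P(i ∈ R) = i^{-2+o(1)} as i→∞, where R = ℤ_{≥0} \ ⋃_j (j, j+Δ_j]. In particular ∑_i P(i ∈ R) < ∞, so R is almost surely finite. -/
/-!
By independence, `P(i ∈ R) = ∏_{k<i} P(Δ_0 ≤ k)`, and since `P(Δ_0 ≤ k) = 1 - P(Δ_0 ≥ k + 1)`
with `(k + 1) P(Δ_0 ≥ k + 1) → 2`, the `k`-th factor has logarithm `≈ -2 / (k + 1)`.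
Hence `log P(i ∈ R)` is a harmonic-weighted average of terms tending to `-2`, and the harmonic
sum is `∼ log i`, so `log P(i ∈ R) / log i → -2`. An exponent below `-1` makes the probabilities
summable, and Borel–Cantelli makes `R` almost surely finite.
-/

open MeasureTheory ProbabilityTheory Filter Topology Asymptotics Finset

theorem tendsto_log_natCast_atTop : Tendsto (fun n : ℕ => Real.log n) atTop atTop :=
  Real.tendsto_log_atTop.comp tendsto_natCast_atTop_atTop

theorem harmonic_isEquivalent_log :
    (fun n : ℕ => (harmonic n : ℝ)) ~[atTop] fun n => Real.log n :=
  (Real.tendsto_harmonic_sub_log.isBigO_one ℝ).trans_isLittleO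
    ((isLittleO_one_left_iff ℝ).2 (tendsto_norm_atTop_atTop.comp tendsto_log_natCast_atTop))

theorem sum_range_inv_succ_eq_harmonic (n : ℕ) :
    ∑ k ∈ range n, ((k : ℝ) + 1)⁻¹ = harmonic n := by
  simp [harmonic]

theorem tendsto_sum_div_succ_div_log {u : ℕ → ℝ} {l : ℝ} (hu : Tendsto u atTop (𝓝 l)) :
    Tendsto (fun n : ℕ => (∑ k ∈ range n, u k / (k + 1)) / Real.log n) atTop (𝓝 l) := by
  have hH := harmonic_isEquivalent_log
  have hHtop : Tendsto (fun n : ℕ => ∑ k ∈ range n, ((k : ℝ) + 1)⁻¹) atTop atTop := by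
    simp only [sum_range_inv_succ_eq_harmonic]
    exact hH.symm.tendsto_atTop tendsto_log_natCast_atTop
  have herr : (fun n : ℕ => ∑ k ∈ range n, (u k - l) / (k + 1)) =o[atTop] fun n => Real.log n := by
    have hterm : (fun k : ℕ => (u k - l) / (k + 1)) =o[atTop] fun k : ℕ => ((k : ℝ) + 1)⁻¹ := by
      simpa only [div_eq_mul_inv, one_mul] using
        ((isLittleO_one_iff ℝ).2 (tendsto_sub_nhds_zero_iff.2 hu)).mul_isBigO
          (isBigO_refl (fun k : ℕ => ((k : ℝ) + 1)⁻¹) atTop)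
    have := hterm.sum_range (fun k => by positivity) hHtop
    simp only [sum_range_inv_succ_eq_harmonic] at this
    exact this.trans_isBigO hH.isBigO
  have hratio : Tendsto (fun n : ℕ => (harmonic n : ℝ) / Real.log n) atTop (𝓝 1) :=
    (isEquivalent_iff_tendsto_one (tendsto_log_natCast_atTop.eventually_ne_atTop 0)).1 hH
  have := herr.tendsto_div_nhds_zero.add (hratio.const_mul l)
  rw [zero_add, mul_one] at this
  refine this.congr fun n => ?_
  rw [mul_div_assoc', ← add_div, ← sum_range_inv_succ_eq_harmonic, mul_sum, ← sum_add_distrib]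
  congr 1
  refine sum_congr rfl fun k _ => ?_
  field_simp
  ring

theorem summable_of_tendsto_log_div_log {p : ℕ → ℝ} {a : ℝ} (hp : ∀ n, 0 ≤ p n) (ha : a < -1)
    (h : Tendsto (fun n : ℕ => Real.log (p n) / Real.log n) atTop (𝓝 a)) : Summable p := by
  obtain ⟨b, hab, hb⟩ := exists_between ha
  refine Summable.of_norm_bounded_eventually_nat (Real.summable_nat_rpow.2 hb) ?_
  filter_upwards [h.eventually (gt_mem_nhds hab), tendsto_log_natCast_atTop.eventually_gt_atTop 0]
    with n hlt hlog
  have hn : (0 : ℝ) < n :=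
    Nat.cast_pos.2 (Nat.pos_of_ne_zero fun h0 => by simp [h0] at hlog)
  rw [div_lt_iff₀ hlog] at hlt
  calc ‖p n‖ = p n := Real.norm_of_nonneg (hp n)
    _ ≤ Real.exp (Real.log (p n)) := Real.le_exp_log _
    _ ≤ Real.exp (Real.log n * b) := Real.exp_le_exp.2 (by linarith)
    _ = (n : ℝ) ^ b := (Real.rpow_def_of_pos hn b).symm

section
variable {Ω : Type*} [MeasurableSpace Ω] {μ : Measure Ω}

theorem measure_forall_add_lt_eq_prod {Δ : ℕ → Ω → ℕ}
    (hmeas : ∀ j, Measurable (Δ j)) (hindep : iIndepFun Δ μ)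
    (hident : ∀ j, μ.map (Δ j) = μ.map (Δ 0)) (i : ℕ) :
    μ {ω | ∀ j < i, j + Δ j ω < i} = ∏ k ∈ range i, μ {ω | Δ 0 ω ≤ k} := by
  have hset : {ω | ∀ j < i, j + Δ j ω < i} = ⋂ j ∈ range i, Δ j ⁻¹' {x | x ≤ i - 1 - j} := by
    ext ω
    simp only [Set.mem_ofPred_eq, Set.mem_iInter, mem_range, Set.mem_preimage]
    exact forall₂_congr fun j hj => by omega
  have hfac : ∀ j, μ (Δ j ⁻¹' {x | x ≤ i - 1 - j}) = μ {ω | Δ 0 ω ≤ i - 1 - j} := fun j => by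
    rw [← Measure.map_apply (hmeas j) trivial, hident j, Measure.map_apply (hmeas 0) trivial]
    rfl
  rw [hset, hindep.meas_biInter fun j _ => ⟨_, trivial, rfl⟩, prod_congr rfl fun j _ => hfac j,
    ← prod_range_reflect]
  exact prod_congr rfl fun j hj => by rw [Nat.sub_sub_self (Nat.le_sub_one_of_lt (mem_range.1 hj))]

theorem tendsto_succ_mul_log_measure_le [IsProbabilityMeasure μ] {X : Ω → ℕ} (hX : Measurable X)
    {a : ℝ} (htail : Tendsto (fun m : ℕ => (m : ℝ) * (μ {ω | m ≤ X ω}).toReal) atTop (𝓝 a)) :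
    Tendsto (fun k : ℕ => ((k : ℝ) + 1) * Real.log (μ {ω | X ω ≤ k}).toReal) atTop (𝓝 (-a)) := by
  have hle : ∀ k : ℕ, (μ {ω | X ω ≤ k}).toReal = 1 + -(μ {ω | k + 1 ≤ X ω}).toReal := fun k => by
    have : {ω | X ω ≤ k} = {ω | k + 1 ≤ X ω}ᶜ := by ext; simp
    rw [this, prob_compl_eq_one_sub (measurableSet_le measurable_const hX),
      ENNReal.toReal_sub_of_le prob_le_one ENNReal.one_ne_top, ENNReal.toReal_one, sub_eq_add_neg]
  have := (Real.tendsto_nat_mul_log_one_add_of_tendsto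
    (g := fun m => -(μ {ω | m ≤ X ω}).toReal) (by simpa only [mul_neg] using htail.neg)).comp
    (tendsto_add_atTop_nat 1)
  refine this.congr fun k => ?_
  simp [hle]
end

theorem tsum_lt_top_of_summable_toReal {α : Type*} {f : α → ENNReal} (hf : ∀ a, f a ≠ ⊤)
    (h : Summable fun a => (f a).toReal) : ∑' a, f a < ⊤ :=
  calc ∑' a, f a = ∑' a, ENNReal.ofReal (f a).toReal := by
        simp only [ENNReal.ofReal_toReal (hf _)]
    _ = ENNReal.ofReal (∑' a, (f a).toReal) :=
        (ENNReal.ofReal_tsum_of_nonneg (fun _ => ENNReal.toReal_nonneg) h).symm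
    _ < ⊤ := ENNReal.ofReal_lt_top

/-- If `(Δ_j)` are i.i.d. nonnegative-integer random variables with
`P(Δ_0 ≥ m) ~ 2/m` and `P(Δ_0 = 0) > 0`, then `P(i ∈ R) = i^{-2+o(1)}` where
`R = ℤ_{≥0} \ ⋃_j (j, j+Δ_j]`; in particular `∑_i P(i ∈ R) < ∞` and `R` is a.s. finite. -/
theorem stmt4 {Ω : Type*} [MeasureSpace Ω] [IsProbabilityMeasure (ℙ : Measure Ω)]
    (Δ : ℕ → Ω → ℕ) (hmeas : ∀ j, Measurable (Δ j))
    (hindep : iIndepFun Δ ℙ)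
    (hident : ∀ j, Measure.map (Δ j) ℙ = Measure.map (Δ 0) ℙ)
    (htail : Tendsto (fun m : ℕ => (m : ℝ) * (ℙ {ω | m ≤ Δ 0 ω}).toReal) atTop (nhds 2))
    (hzero : 0 < ℙ {ω | Δ 0 ω = 0}) :
    Tendsto (fun i : ℕ =>
        Real.log (ℙ {ω | ∀ j < i, j + Δ j ω < i}).toReal / Real.log i) atTop (nhds (-2))
    ∧ (∑' i : ℕ, ℙ {ω | ∀ j < i, j + Δ j ω < i}) < ⊤
    ∧ ℙ {ω | {i : ℕ | ∀ j < i, j + Δ j ω < i}.Infinite} = 0 := by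
  have hpos : ∀ k : ℕ, 0 < (ℙ {ω | Δ 0 ω ≤ k}).toReal := fun k =>
    ENNReal.toReal_pos (hzero.trans_le (measure_mono fun ω (h : Δ 0 ω = 0) => by simp [h])).ne'
      (measure_ne_top _ _)
  have hlog : ∀ i : ℕ, Real.log (ℙ {ω | ∀ j < i, j + Δ j ω < i}).toReal =
      ∑ k ∈ range i, ((k : ℝ) + 1) * Real.log (ℙ {ω | Δ 0 ω ≤ k}).toReal / (k + 1) := fun i => by
    rw [measure_forall_add_lt_eq_prod hmeas hindep hident, ENNReal.toReal_prod,
      Real.log_prod fun k _ => (hpos k).ne']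
    exact sum_congr rfl fun k _ => by field_simp
  have hexponent : Tendsto (fun i : ℕ =>
      Real.log (ℙ {ω | ∀ j < i, j + Δ j ω < i}).toReal / Real.log i) atTop (𝓝 (-2)) :=
    (tendsto_sum_div_succ_div_log (tendsto_succ_mul_log_measure_le (hmeas 0) htail)).congr
      fun i => by rw [hlog]
  have hsum : (∑' i : ℕ, ℙ {ω | ∀ j < i, j + Δ j ω < i}) < ⊤ :=
    tsum_lt_top_of_summable_toReal (fun _ => measure_ne_top _ _)
      (summable_of_tendsto_log_div_log (fun _ => ENNReal.toReal_nonneg) (by norm_num) hexponent)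
  refine ⟨hexponent, hsum, measure_mono_null (fun ω hω => ?_)
    (measure_limsup_atTop_eq_zero hsum.ne)⟩
  exact mem_limsup_iff_frequently_mem.2 (Nat.frequently_atTop_iff_infinite.2 hω)
end

section
/- Let (Δ_j)_{j≥0} be i.i.d. nonnegative-integer random variables with P(Δ_0 = 0) > 0 and m²·P(Δ_0 ≥ m) → 2 as m→∞. Then the infinite product ∏_{j=1}^{∞}(1 - P(Δ_0 ≥ j)) converges to a strictly positive limit; consequently the regenerative set R = ℤ_{≥0} \ ⋃_j(j, j+Δ_j] has positive asymptotic density almost surely. -/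
/-
Write `p k = P(Δ₀ ≥ k)` and `a n = ∏_{k ≤ n} (1 - p k)`. The event `i ∈ R` is the intersection
of the independent events `Δ_j < i - j`, `j < i`, so `P(i ∈ R) = a i`, and likewise
`P(i ∈ R, i + d ∈ R) = a i * a d`. Since `p k = O(k⁻²)`, the Weierstrass product inequality
gives `a d - a m ≤ 2B / (d + 1)` for `d ≤ m`; hence `a` decreases to a limit `L`, which is
positive because `p 1 < 1`, and the indicators of `i ∈ R` and `j ∈ R` have covariance
`O(1 / |i - j|)`. The variance of `#(R ∩ [1, n])` is then `O(n^{3/2})`, so Chebyshev and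
Borel–Cantelli along `n = k⁴`, with the monotonicity of the count in between, give
`#(R ∩ [1, n]) / n → L` almost surely.
-/

open MeasureTheory ProbabilityTheory Filter Finset Topology

theorem one_sub_sum_le_prod_one_sub {ι : Type*} (s : Finset ι) {f : ι → ℝ}
    (h0 : ∀ i ∈ s, 0 ≤ f i) (h1 : ∀ i ∈ s, f i ≤ 1) : 1 - ∑ i ∈ s, f i ≤ ∏ i ∈ s, (1 - f i) := by
  induction s using Finset.cons_induction with
  | empty => simp
  | cons a s _ ih =>
    rw [sum_cons, prod_cons]
    have hs : 0 ≤ ∑ i ∈ s, f i := sum_nonneg fun i hi ↦ h0 i (mem_cons_of_mem hi)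
    have ih := ih (fun i hi ↦ h0 i (mem_cons_of_mem hi)) (fun i hi ↦ h1 i (mem_cons_of_mem hi))
    have ha0 := h0 a (mem_cons_self a s)
    have ha1 := h1 a (mem_cons_self a s)
    nlinarith

theorem sum_range_inv_succ_le_two_sqrt (n : ℕ) : ∑ d ∈ range n, ((d : ℝ) + 1)⁻¹ ≤ 2 * √n := by
  induction n with
  | zero => simp
  | succ n ih =>
    rw [sum_range_succ, Nat.cast_succ]
    set s := √((n : ℝ) + 1)
    have hts : √(n : ℝ) ≤ s := Real.sqrt_le_sqrt (by linarith)
    have hs1 : 1 ≤ s := Real.one_le_sqrt.2 (by linarith)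
    have hs : s ^ 2 = n + 1 := Real.sq_sqrt (by positivity)
    have ht : √(n : ℝ) ^ 2 = n := Real.sq_sqrt (by positivity)
    -- `(s - √n)(s + √n) = 1` and `s + √n ≤ 2 s ≤ 2 s²`
    have step : ((n : ℝ) + 1)⁻¹ ≤ 2 * s - 2 * √n := by
      rw [inv_le_iff_one_le_mul₀ (by positivity)]
      nlinarith [mul_nonneg (sub_nonneg.2 hts) (sub_nonneg.2 hs1)]
    linarith

theorem sum_range_comp_dist_le {f : ℕ → ℝ} (hf : ∀ d, 0 ≤ f d) {i n : ℕ} (hi : i < n) :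
    ∑ j ∈ range n, f (Nat.dist i j) ≤ 2 * ∑ d ∈ range n, f d := by
  have hfiber (d : ℕ) : #{j ∈ range n | Nat.dist i j = d} ≤ 2 := by
    refine (card_le_card fun j hj ↦ ?_).trans (card_le_two (a := i - d) (b := i + d))
    rw [mem_filter, Nat.dist] at hj
    rw [mem_insert, mem_singleton]
    omega
  rw [sum_comp, mul_sum]
  calc ∑ d ∈ (range n).image (Nat.dist i), #{j ∈ range n | Nat.dist i j = d} • f d
      ≤ ∑ d ∈ (range n).image (Nat.dist i), 2 * f d := by
        gcongr with d
        rw [nsmul_eq_mul]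
        exact mul_le_mul_of_nonneg_right (by exact_mod_cast hfiber d) (hf d)
    _ ≤ ∑ d ∈ range n, 2 * f d := by
        refine sum_le_sum_of_subset_of_nonneg (fun d hd ↦ ?_) fun d _ _ ↦ by linarith [hf d]
        obtain ⟨j, hj, rfl⟩ := mem_image.1 hd
        simp only [mem_range, Nat.dist] at hj ⊢
        omega

theorem exists_le_div_sq_of_tendsto {p : ℕ → ℝ} {l : ℝ}
    (h : Tendsto (fun m : ℕ ↦ (m : ℝ) ^ 2 * p m) atTop (𝓝 l)) :
    ∃ B, ∀ k, 0 < k → p k ≤ B / (k : ℝ) ^ 2 := by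
  obtain ⟨B, hB⟩ := h.bddAbove_range
  refine ⟨B, fun k hk ↦ ?_⟩
  rw [le_div_iff₀ (by positivity), mul_comm]
  exact hB ⟨k, rfl⟩

theorem tendsto_div_of_monotone_of_tendsto_div_succ_pow {u : ℕ → ℝ} {l : ℝ} (hmono : Monotone u)
    {q : ℕ} (hq : q ≠ 0)
    (hlim : Tendsto (fun k : ℕ ↦ u ((k + 1) ^ q) / ((k + 1) ^ q : ℕ)) atTop (𝓝 l)) :
    Tendsto (fun n : ℕ ↦ u n / n) atTop (𝓝 l) := by
  refine tendsto_div_of_monotone_of_exists_subseq_tendsto_div u l hmono fun a ha ↦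
    ⟨fun k ↦ (k + 1) ^ q, ?_, (tendsto_pow_atTop hq).comp (tendsto_add_atTop_nat 1), hlim⟩
  have hratio : Tendsto (fun k : ℕ ↦ (1 + 1 / ((k : ℝ) + 1)) ^ q) atTop (𝓝 1) := by
    simpa using ((tendsto_const_nhds (x := (1 : ℝ))).add
      tendsto_one_div_add_atTop_nhds_zero_nat).pow q
  filter_upwards [hratio.eventually (eventually_le_nhds ha)] with k hk
  have hk1 : (0 : ℝ) < k + 1 := by positivity
  calc (((k + 1 + 1) ^ q : ℕ) : ℝ) = (1 + 1 / ((k : ℝ) + 1)) ^ q * ((k + 1 : ℕ) ^ q : ℕ) := by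
        push_cast
        rw [← mul_pow]
        congr 1
        field_simp
    _ ≤ a * ((k + 1 : ℕ) ^ q : ℕ) := by gcongr

def prodOneSub (p : ℕ → ℝ) (n : ℕ) : ℝ := ∏ k ∈ Icc 1 n, (1 - p k)

namespace prodOneSub

variable {p : ℕ → ℝ}

theorem mul_prod_Ioc (p : ℕ → ℝ) {d m : ℕ} (h : d ≤ m) :
    prodOneSub p d * ∏ k ∈ Ioc d m, (1 - p k) = prodOneSub p m :=
  prod_Ioc_consecutive _ (Nat.zero_le d) h

theorem pos (hp : ∀ k, 0 < k → p k < 1) (n : ℕ) : 0 < prodOneSub p n :=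
  prod_pos fun k hk ↦ sub_pos.2 (hp k (mem_Icc.1 hk).1)

theorem nonneg (hp1 : ∀ k, p k ≤ 1) (n : ℕ) : 0 ≤ prodOneSub p n :=
  prod_nonneg fun k _ ↦ sub_nonneg.2 (hp1 k)

theorem prod_Ioc_le_one (hp0 : ∀ k, 0 ≤ p k) (hp1 : ∀ k, p k ≤ 1) (d m : ℕ) :
    ∏ k ∈ Ioc d m, (1 - p k) ≤ 1 :=
  prod_le_one (fun k _ ↦ sub_nonneg.2 (hp1 k)) fun k _ ↦ by linarith [hp0 k]

theorem le_one (hp0 : ∀ k, 0 ≤ p k) (hp1 : ∀ k, p k ≤ 1) (n : ℕ) : prodOneSub p n ≤ 1 :=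
  prod_Ioc_le_one hp0 hp1 0 n

theorem antitone (hp0 : ∀ k, 0 ≤ p k) (hp1 : ∀ k, p k ≤ 1) : Antitone (prodOneSub p) :=
  fun d m h ↦ by
    rw [← mul_prod_Ioc p h]
    exact mul_le_of_le_one_right (nonneg hp1 d) (prod_Ioc_le_one hp0 hp1 d m)

theorem tendsto_iInf (hp0 : ∀ k, 0 ≤ p k) (hp1 : ∀ k, p k ≤ 1) :
    Tendsto (prodOneSub p) atTop (𝓝 (⨅ n, prodOneSub p n)) :=
  tendsto_atTop_ciInf (antitone hp0 hp1) ⟨0, Set.forall_mem_range.2 (nonneg hp1)⟩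

theorem nonneg_of_le_div_sq (hp0 : ∀ k, 0 ≤ p k) {B : ℝ}
    (hB : ∀ k, 0 < k → p k ≤ B / (k : ℝ) ^ 2) : 0 ≤ B := by
  simpa using (hp0 1).trans (hB 1 one_pos)

theorem sum_Ioc_le_of_le_div_sq (hp0 : ∀ k, 0 ≤ p k) {B : ℝ}
    (hB : ∀ k, 0 < k → p k ≤ B / (k : ℝ) ^ 2) (d m : ℕ) :
    ∑ k ∈ Ioc d m, p k ≤ 2 * B / (d + 1) := by
  have hB0 := nonneg_of_le_div_sq hp0 hB
  calc ∑ k ∈ Ioc d m, p k ≤ ∑ k ∈ Ioo d (m + 1), B * ((k : ℝ) ^ 2)⁻¹ := by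
        rw [Finset.Ioo_add_one_right_eq_Ioc]
        refine sum_le_sum fun k hk ↦ ?_
        rw [← div_eq_mul_inv]
        exact hB k (Nat.zero_lt_of_lt (mem_Ioc.1 hk).1)
    _ = B * ∑ k ∈ Ioo d (m + 1), ((k : ℝ) ^ 2)⁻¹ := (mul_sum ..).symm
    _ ≤ B * (2 / (d + 1)) := by gcongr; exact sum_Ioo_inv_sq_le d (m + 1)
    _ = 2 * B / (d + 1) := by ring

/-- Weierstrass product inequality for the factors with `d < k ≤ m`, and
`∑_{k > d} k⁻² ≤ 2/(d+1)`. -/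
theorem mul_one_sub_le (hp0 : ∀ k, 0 ≤ p k) (hp1 : ∀ k, p k ≤ 1) {B : ℝ}
    (hB : ∀ k, 0 < k → p k ≤ B / (k : ℝ) ^ 2) {d m : ℕ} (h : d ≤ m) :
    prodOneSub p d * (1 - 2 * B / (d + 1)) ≤ prodOneSub p m := by
  rw [← mul_prod_Ioc p h]
  gcongr
  · exact nonneg hp1 d
  · calc 1 - 2 * B / (d + 1) ≤ 1 - ∑ k ∈ Ioc d m, p k := by
          linarith [sum_Ioc_le_of_le_div_sq hp0 hB d m]
      _ ≤ _ := one_sub_sum_le_prod_one_sub _ (fun k _ ↦ hp0 k) fun k _ ↦ hp1 k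

theorem sub_le (hp0 : ∀ k, 0 ≤ p k) (hp1 : ∀ k, p k ≤ 1) {B : ℝ}
    (hB : ∀ k, 0 < k → p k ≤ B / (k : ℝ) ^ 2) {d m : ℕ} (h : d ≤ m) :
    prodOneSub p d - prodOneSub p m ≤ 2 * B / (d + 1) := by
  have := mul_one_sub_le hp0 hp1 hB h
  have : 0 ≤ 2 * B / (d + 1) := by have := nonneg_of_le_div_sq hp0 hB; positivity
  nlinarith [le_one hp0 hp1 d]

theorem iInf_pos (hp0 : ∀ k, 0 ≤ p k) (hp1 : ∀ k, p k ≤ 1) (hp : ∀ k, 0 < k → p k < 1) {B : ℝ}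
    (hB : ∀ k, 0 < k → p k ≤ B / (k : ℝ) ^ 2) : 0 < ⨅ n, prodOneSub p n := by
  obtain ⟨d, hd⟩ := exists_nat_gt (4 * B)
  have hhalf : 2 * B / (d + 1) ≤ 1 / 2 := by
    rw [div_le_iff₀ (by positivity)]; linarith
  have hlow : prodOneSub p d / 2 ≤ ⨅ n, prodOneSub p n := by
    refine le_ciInf fun m ↦ ?_
    have hd0 := pos hp d
    rcases le_total d m with h | h
    · nlinarith [mul_one_sub_le hp0 hp1 hB h]
    · linarith [antitone hp0 hp1 h]
  linarith [pos hp d]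

end prodOneSub

section Moments

variable {Ω : Type*} [MeasurableSpace Ω] {μ : Measure Ω} [IsFiniteMeasure μ]

theorem variance_sum_range_le_of_covariance_le {X : ℕ → Ω → ℝ} (hX : ∀ i, MemLp (X i) 2 μ)
    {C : ℝ} (hcov : ∀ i j, cov[X i, X j; μ] ≤ C / (Nat.dist i j + 1)) (n : ℕ) :
    Var[∑ i ∈ range n, X i; μ] ≤ 4 * C * n * √n := by
  have hC : 0 ≤ C := by
    simpa using ((variance_nonneg (X 0) μ).trans_eq
      (covariance_self (hX 0).aemeasurable).symm).trans (hcov 0 0)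
  rw [variance_sum' fun i _ ↦ hX i]
  calc ∑ i ∈ range n, ∑ j ∈ range n, cov[X i, X j; μ]
      ≤ ∑ i ∈ range n, ∑ j ∈ range n, C * ((Nat.dist i j : ℝ) + 1)⁻¹ := by
        gcongr with i _ j _
        exact (hcov i j).trans_eq (div_eq_mul_inv _ _)
    _ ≤ ∑ i ∈ range n, 2 * ∑ d ∈ range n, C * ((d : ℝ) + 1)⁻¹ :=
        sum_le_sum fun i hi ↦ sum_range_comp_dist_le (f := fun d ↦ C * ((d : ℝ) + 1)⁻¹)
          (fun d ↦ by positivity) (mem_range.1 hi)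
    _ ≤ ∑ i ∈ range n, 2 * (C * (2 * √n)) := by
        gcongr
        rw [← mul_sum]
        exact mul_le_mul_of_nonneg_left (sum_range_inv_succ_le_two_sqrt n) hC
    _ = 4 * C * n * √n := by
        rw [sum_const, card_range, nsmul_eq_mul]
        ring

/-- Chebyshev's inequality with tolerance `c k / (m + 1)`, followed by Borel–Cantelli for each
`m`. -/
theorem ae_tendsto_sub_integral_div_of_summable_variance {Y : ℕ → Ω → ℝ}
    (hY : ∀ k, MemLp (Y k) 2 μ) {c : ℕ → ℝ} (hc : ∀ k, 0 < c k)
    (hsum : Summable fun k ↦ Var[Y k; μ] / c k ^ 2) :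
    ∀ᵐ ω ∂μ, Tendsto (fun k ↦ (Y k ω - μ[Y k]) / c k) atTop (𝓝 0) := by
  have hBC (m : ℕ) : ∀ᵐ ω ∂μ, ∀ᶠ k in atTop, |Y k ω - μ[Y k]| < (m + 1 : ℝ)⁻¹ * c k := by
    have hsum' : Summable fun k ↦ (m + 1 : ℝ) ^ 2 * (Var[Y k; μ] / c k ^ 2) := hsum.mul_left _
    have htsum : ∑' k, μ {ω | (m + 1 : ℝ)⁻¹ * c k ≤ |Y k ω - μ[Y k]|} ≠ ⊤ := by
      refine ne_top_of_le_ne_top (ENNReal.ofReal_ne_top (r := ∑' k, (m + 1 : ℝ) ^ 2 *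
        (Var[Y k; μ] / c k ^ 2))) ?_
      rw [ENNReal.ofReal_tsum_of_nonneg (fun k ↦ by have := variance_nonneg (Y k) μ; positivity)
        hsum']
      refine ENNReal.tsum_le_tsum fun k ↦ (meas_ge_le_variance_div_sq (hY k) (by
        have := hc k; positivity)).trans_eq ?_
      congr 1
      field_simp
    filter_upwards [ae_eventually_notMem htsum] with ω hω
    filter_upwards [hω] with k hk
    simpa using hk
  filter_upwards [ae_all_iff.2 hBC] with ω hω
  refine Metric.tendsto_nhds.2 fun ε hε ↦ ?_
  obtain ⟨m, hm⟩ := exists_nat_one_div_lt hε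
  filter_upwards [hω m] with k hk
  rw [Real.dist_eq, sub_zero, abs_div, abs_of_pos (hc k), div_lt_iff₀ (hc k)]
  calc |Y k ω - μ[Y k]| < (m + 1 : ℝ)⁻¹ * c k := hk
    _ ≤ ε * c k := mul_le_mul_of_nonneg_right (by simpa using hm.le) (hc k).le

theorem ae_tendsto_sum_range_div_of_covariance_le {X : ℕ → Ω → ℝ} (hX : ∀ i, MemLp (X i) 2 μ)
    (hX0 : ∀ i ω, 0 ≤ X i ω) {C L : ℝ} (hmean : Tendsto (fun i ↦ μ[X i]) atTop (𝓝 L))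
    (hcov : ∀ i j, cov[X i, X j; μ] ≤ C / (Nat.dist i j + 1)) :
    ∀ᵐ ω ∂μ, Tendsto (fun n : ℕ ↦ (∑ i ∈ range n, X i ω) / n) atTop (𝓝 L) := by
  have hmeanS : Tendsto (fun n : ℕ ↦ (∫ ω, (∑ i ∈ range n, X i) ω ∂μ) / n) atTop (𝓝 L) := by
    refine hmean.cesaro.congr fun n ↦ ?_
    simp only [Finset.sum_apply]
    rw [integral_finsetSum _ fun i _ ↦ (hX i).integrable one_le_two, inv_mul_eq_div]
  set t : ℕ → ℕ := fun k ↦ (k + 1) ^ 4 with ht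
  have ht_tendsto : Tendsto t atTop atTop :=
    (tendsto_pow_atTop four_ne_zero).comp (tendsto_add_atTop_nat 1)
  have htR (k : ℕ) : ((t k : ℕ) : ℝ) = ((k : ℝ) + 1) ^ 4 := by rw [ht]; push_cast; ring
  have hvar (k : ℕ) : Var[∑ i ∈ range (t k), X i; μ] / ((t k : ℕ) : ℝ) ^ 2
      ≤ 4 * C / ((k : ℝ) + 1) ^ 2 := by
    have hsqrt : √((t k : ℕ) : ℝ) = ((k : ℝ) + 1) ^ 2 := by
      rw [htR, show ((k : ℝ) + 1) ^ 4 = (((k : ℝ) + 1) ^ 2) ^ 2 by ring]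
      exact Real.sqrt_sq (by positivity)
    rw [div_le_div_iff₀ (by positivity) (by positivity)]
    calc Var[∑ i ∈ range (t k), X i; μ] * ((k : ℝ) + 1) ^ 2
        ≤ 4 * C * (t k : ℕ) * √((t k : ℕ) : ℝ) * ((k : ℝ) + 1) ^ 2 := by
          gcongr
          exact variance_sum_range_le_of_covariance_le hX hcov _
      _ = 4 * C * ((t k : ℕ) : ℝ) ^ 2 := by rw [hsqrt, htR]; ring
  have hsum : Summable fun k ↦ Var[∑ i ∈ range (t k), X i; μ] / ((t k : ℕ) : ℝ) ^ 2 := by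
    refine Summable.of_nonneg_of_le (fun k ↦ div_nonneg (variance_nonneg _ _) (sq_nonneg _)) hvar ?_
    have := ((summable_nat_add_iff 1).2 (Real.summable_nat_pow_inv.2 one_lt_two)).mul_left (4 * C)
    simpa [div_eq_mul_inv] using this
  filter_upwards [ae_tendsto_sub_integral_div_of_summable_variance
    (fun k ↦ memLp_finsetSum' _ fun i _ ↦ hX i) (fun k ↦ by rw [htR]; positivity) hsum] with ω hω
  have hmono : Monotone fun n ↦ ∑ i ∈ range n, X i ω :=
    monotone_nat_of_le_succ fun n ↦ by rw [sum_range_succ]; linarith [hX0 n ω]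
  refine tendsto_div_of_monotone_of_tendsto_div_succ_pow hmono four_ne_zero ?_
  have := hω.add (hmeanS.comp ht_tendsto)
  rw [zero_add] at this
  refine this.congr fun k ↦ ?_
  rw [Function.comp_apply, ← add_div, sub_add_cancel, Finset.sum_apply]

end Moments

section Regeneration

variable {Ω : Type*} [MeasurableSpace Ω] {μ : Measure Ω}

/-- The event `i ∈ R`, i.e. no interval `(j, j + Δ_j]` with `j < i` covers `i`. -/
def regenerationEvent (Δ : ℕ → Ω → ℕ) (i : ℕ) : Set Ω := {ω | ∀ j < i, j + Δ j ω < i}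

theorem measurableSet_regenerationEvent {Δ : ℕ → Ω → ℕ} (hmeas : ∀ j, Measurable (Δ j)) (i : ℕ) :
    MeasurableSet (regenerationEvent Δ i) := by
  have : regenerationEvent Δ i = ⋂ j ∈ range i, Δ j ⁻¹' {x | j + x < i} := by
    ext ω
    simp [regenerationEvent]
  rw [this]
  exact Finset.measurableSet_biInter _ fun j _ ↦ hmeas j .of_discrete

/-- Regeneration at `i` and at `i + d` only involves `Δ_j` for `j < i + d`, each through a
constraint of its own; independence and stationarity turn the two blocks into the products for
`i` and for `d`. -/
theorem measure_regenerationEvent_inter {Δ : ℕ → Ω → ℕ} (hmeas : ∀ j, Measurable (Δ j))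
    (hindep : iIndepFun Δ μ) (hident : ∀ j, Measure.map (Δ j) μ = Measure.map (Δ 0) μ)
    (i d : ℕ) :
    μ (regenerationEvent Δ i ∩ regenerationEvent Δ (i + d)) =
      (∏ k ∈ Icc 1 i, μ {ω | Δ 0 ω < k}) * ∏ k ∈ Icc 1 d, μ {ω | Δ 0 ω < k} := by
  have hinter : regenerationEvent Δ i ∩ regenerationEvent Δ (i + d) =
      ⋂ j ∈ range (i + d), Δ j ⁻¹' {x | j + x < if j < i then i else i + d} := by
    ext ω
    simp only [regenerationEvent, Set.mem_inter_iff, Set.mem_ofPred_eq, Set.mem_iInter,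
      Set.mem_preimage, mem_range]
    constructor
    · rintro ⟨h1, h2⟩ j hj
      split_ifs with hji
      · exact h1 j hji
      · exact h2 j hj
    · intro h
      refine ⟨fun j hj ↦ by simpa [hj] using h j (by omega), fun j hj ↦ ?_⟩
      have := h j hj
      split_ifs at this <;> omega
  have hblock (n s : ℕ) (e : ℕ → ℕ) (he : ∀ x < n, ∀ y, (s + x + y < e (s + x) ↔ x + y < n)) :
      ∏ x ∈ range n, μ (Δ (s + x) ⁻¹' {y | s + x + y < e (s + x)}) =
        ∏ k ∈ Icc 1 n, μ {ω | Δ 0 ω < k} := by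
    refine prod_nbij' (fun x ↦ n - x) (fun k ↦ n - k) (by simp only [mem_range, mem_Icc]; omega)
      (by simp only [mem_Icc, mem_range]; omega) (by simp only [mem_range]; omega)
      (by simp only [mem_Icc]; omega) fun x hx ↦ ?_
    rw [← Measure.map_apply (hmeas _) .of_discrete, hident,
      Measure.map_apply (hmeas 0) .of_discrete]
    congr 1
    ext ω
    simp only [Set.mem_preimage, Set.mem_ofPred_eq]
    rw [he x (mem_range.1 hx)]
    omega
  rw [hinter, hindep.measure_inter_preimage_eq_mul _ fun _ _ ↦ .of_discrete, prod_range_add]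
  congr 1
  · simpa using hblock i 0 (fun j ↦ if j < i then i else i + d) fun x hx y ↦ by simp [hx]
  · exact hblock d i (fun j ↦ if j < i then i else i + d) fun x _ y ↦ by
      simp only [show ¬ i + x < i by omega, if_false]
      omega

variable [IsProbabilityMeasure μ]

theorem covariance_indicator_one {A B : Set Ω} (hA : MeasurableSet A) (hB : MeasurableSet B) :
    cov[A.indicator 1, B.indicator 1; μ] = μ.real (A ∩ B) - μ.real A * μ.real B := by
  have hA' : MemLp (A.indicator (1 : Ω → ℝ)) 2 μ := (memLp_const 1).indicator hA
  have hB' : MemLp (B.indicator (1 : Ω → ℝ)) 2 μ := (memLp_const 1).indicator hB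
  rw [covariance_eq_sub hA' hB',
    ← Set.inter_indicator_one, integral_indicator_one (hA.inter hB), integral_indicator_one hA,
    integral_indicator_one hB]

theorem measureReal_regenerationEvent_inter {Δ : ℕ → Ω → ℕ} (hmeas : ∀ j, Measurable (Δ j))
    (hindep : iIndepFun Δ μ) (hident : ∀ j, Measure.map (Δ j) μ = Measure.map (Δ 0) μ)
    (i d : ℕ) :
    μ.real (regenerationEvent Δ i ∩ regenerationEvent Δ (i + d)) =
      prodOneSub (fun k ↦ μ.real {ω | k ≤ Δ 0 ω}) i *
        prodOneSub (fun k ↦ μ.real {ω | k ≤ Δ 0 ω}) d := by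
  have hq (k : ℕ) : (μ {ω | Δ 0 ω < k}).toReal = 1 - μ.real {ω | k ≤ Δ 0 ω} := by
    have hm : MeasurableSet {ω | k ≤ Δ 0 ω} := hmeas 0 .of_discrete
    rw [← measureReal_def, ← probReal_compl_eq_one_sub hm]
    congr 1
    ext ω
    simp
  rw [measureReal_def, measure_regenerationEvent_inter hmeas hindep hident, ENNReal.toReal_mul,
    ENNReal.toReal_prod, ENNReal.toReal_prod]
  simp only [hq, prodOneSub]

theorem measureReal_regenerationEvent {Δ : ℕ → Ω → ℕ} (hmeas : ∀ j, Measurable (Δ j))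
    (hindep : iIndepFun Δ μ) (hident : ∀ j, Measure.map (Δ j) μ = Measure.map (Δ 0) μ)
    (i : ℕ) : μ.real (regenerationEvent Δ i) = prodOneSub (fun k ↦ μ.real {ω | k ≤ Δ 0 ω}) i := by
  simpa [prodOneSub] using measureReal_regenerationEvent_inter hmeas hindep hident i 0

theorem covariance_indicator_regenerationEvent_le {Δ : ℕ → Ω → ℕ}
    (hmeas : ∀ j, Measurable (Δ j)) (hindep : iIndepFun Δ μ)
    (hident : ∀ j, Measure.map (Δ j) μ = Measure.map (Δ 0) μ) {B : ℝ}
    (hB : ∀ k, 0 < k → μ.real {ω | k ≤ Δ 0 ω} ≤ B / (k : ℝ) ^ 2) (i j : ℕ) :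
    cov[(regenerationEvent Δ i).indicator 1, (regenerationEvent Δ j).indicator 1; μ] ≤
      2 * B / (Nat.dist i j + 1) := by
  wlog hij : i ≤ j generalizing i j
  · rw [covariance_comm, Nat.dist_comm]
    exact this j i (by omega)
  obtain ⟨d, rfl⟩ := Nat.exists_eq_add_of_le hij
  set p : ℕ → ℝ := fun k ↦ μ.real {ω | k ≤ Δ 0 ω}
  have hp0 (k : ℕ) : 0 ≤ p k := measureReal_nonneg
  have hp1 (k : ℕ) : p k ≤ 1 := measureReal_le_one
  rw [covariance_indicator_one (measurableSet_regenerationEvent hmeas i)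
      (measurableSet_regenerationEvent hmeas (i + d)),
    measureReal_regenerationEvent_inter hmeas hindep hident,
    measureReal_regenerationEvent hmeas hindep hident,
    measureReal_regenerationEvent hmeas hindep hident, Nat.dist_eq_sub_of_le hij,
    Nat.add_sub_cancel_left]
  -- `a_i a_d - a_i a_{i+d} = a_i (a_d - a_{i+d})` with `0 ≤ a_i ≤ 1`
  have hdecr := prodOneSub.sub_le hp0 hp1 hB (Nat.le_add_left d i)
  have hanti := prodOneSub.antitone hp0 hp1 (Nat.le_add_left d i)
  nlinarith [prodOneSub.nonneg hp1 i, prodOneSub.le_one hp0 hp1 i]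

theorem ae_tendsto_sum_indicator_regenerationEvent_div {Δ : ℕ → Ω → ℕ}
    (hmeas : ∀ j, Measurable (Δ j)) (hindep : iIndepFun Δ μ)
    (hident : ∀ j, Measure.map (Δ j) μ = Measure.map (Δ 0) μ) {B : ℝ}
    (hB : ∀ k, 0 < k → μ.real {ω | k ≤ Δ 0 ω} ≤ B / (k : ℝ) ^ 2) :
    ∀ᵐ ω ∂μ, Tendsto (fun n : ℕ ↦
        (∑ i ∈ range n, (regenerationEvent Δ (i + 1)).indicator (1 : Ω → ℝ) ω) / n) atTop
      (𝓝 (⨅ n, prodOneSub (fun k ↦ μ.real {ω | k ≤ Δ 0 ω}) n)) := by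
  have hmean : Tendsto (fun i ↦ ∫ ω, (regenerationEvent Δ (i + 1)).indicator (1 : Ω → ℝ) ω ∂μ)
      atTop (𝓝 (⨅ n, prodOneSub (fun k ↦ μ.real {ω | k ≤ Δ 0 ω}) n)) := by
    simp only [integral_indicator_one (measurableSet_regenerationEvent hmeas _),
      measureReal_regenerationEvent hmeas hindep hident]
    exact (prodOneSub.tendsto_iInf (fun _ ↦ measureReal_nonneg) fun _ ↦ measureReal_le_one).comp
      (tendsto_add_atTop_nat 1)
  refine ae_tendsto_sum_range_div_of_covariance_le (C := 2 * B)
    (X := fun i ↦ (regenerationEvent Δ (i + 1)).indicator 1)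
    (fun i ↦ (memLp_const 1).indicator (measurableSet_regenerationEvent hmeas (i + 1)))
    (fun i ↦ Set.indicator_nonneg fun _ _ ↦ zero_le_one) hmean fun i j ↦ ?_
  simpa [Nat.dist_add_add_right] using
    covariance_indicator_regenerationEvent_le hmeas hindep hident hB (i + 1) (j + 1)

theorem measureReal_le_lt_one {X : Ω → ℕ} (hX : Measurable X) (h0 : 0 < μ {ω | X ω = 0})
    {k : ℕ} (hk : 0 < k) : μ.real {ω | k ≤ X ω} < 1 := by
  have hm : MeasurableSet {ω | X ω = 0} := hX (.singleton 0)
  have hpos : 0 < μ.real {ω | X ω = 0} := ENNReal.toReal_pos h0.ne' (measure_ne_top μ _)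
  calc μ.real {ω | k ≤ X ω} ≤ μ.real {ω | X ω = 0}ᶜ :=
        measureReal_mono fun ω (h : k ≤ X ω) ↦ by
          rw [Set.mem_compl_iff, Set.mem_ofPred_eq]
          omega
    _ < 1 := by
        rw [probReal_compl_eq_one_sub hm]
        linarith

end Regeneration

theorem card_filter_regeneration_eq_sum_indicator {Ω : Type*} (Δ : ℕ → Ω → ℕ) (ω : Ω) (n : ℕ) :
    (#{i ∈ Icc 1 n | ∀ j < i, j + Δ j ω < i} : ℝ) =
      ∑ i ∈ range n, (regenerationEvent Δ (i + 1)).indicator 1 ω := by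
  rw [card_filter, Nat.cast_sum]
  refine (sum_nbij' (· + 1) (· - 1) (by simp only [mem_range, mem_Icc]; omega)
    (by simp only [mem_Icc, mem_range]; omega) (by simp only [mem_range]; omega)
    (by simp only [mem_Icc]; omega) fun i _ ↦ ?_).symm
  simp [Set.indicator_apply, regenerationEvent]

/-- If `(Δ_j)` are i.i.d. nonnegative-integer random variables with `P(Δ_0 = 0) > 0`
and `m²·P(Δ_0 ≥ m) → 2`, then `∏_{j=1}^{∞} (1 - P(Δ_0 ≥ j))` converges to a strictly
positive limit `L`, and the regenerative set `R = ℤ_{≥0} \ ⋃_j (j, j+Δ_j]` a.s. has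
positive asymptotic density (equal to `L`). -/
theorem stmt5 {Ω : Type*} [MeasureSpace Ω] [IsProbabilityMeasure (ℙ : Measure Ω)]
    (Δ : ℕ → Ω → ℕ) (hmeas : ∀ j, Measurable (Δ j))
    (hindep : iIndepFun Δ ℙ)
    (hident : ∀ j, Measure.map (Δ j) ℙ = Measure.map (Δ 0) ℙ)
    (htail : Tendsto (fun m : ℕ => (m : ℝ) ^ 2 * (ℙ {ω | m ≤ Δ 0 ω}).toReal) atTop (nhds 2))
    (hzero : 0 < ℙ {ω | Δ 0 ω = 0}) :
    ∃ L : ℝ, 0 < L ∧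
      Tendsto (fun n : ℕ =>
          ∏ j ∈ Finset.Icc 1 n, (1 - (ℙ {ω | j ≤ Δ 0 ω}).toReal)) atTop (nhds L) ∧
      ∀ᵐ ω ∂(ℙ : Measure Ω),
        Tendsto (fun n : ℕ =>
            (((Finset.Icc 1 n).filter (fun i => ∀ j < i, j + Δ j ω < i)).card : ℝ) / n)
          atTop (nhds L) := by
  set p : ℕ → ℝ := fun k ↦ (ℙ {ω | k ≤ Δ 0 ω}).toReal
  have hp0 (k : ℕ) : 0 ≤ p k := measureReal_nonneg
  have hp1 (k : ℕ) : p k ≤ 1 := measureReal_le_one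
  obtain ⟨B, hB⟩ := exists_le_div_sq_of_tendsto htail
  refine ⟨⨅ n, prodOneSub p n,
    prodOneSub.iInf_pos hp0 hp1 (fun k ↦ measureReal_le_lt_one (hmeas 0) hzero) hB,
    prodOneSub.tendsto_iInf hp0 hp1, ?_⟩
  filter_upwards [ae_tendsto_sum_indicator_regenerationEvent_div hmeas hindep hident hB] with ω hω
  exact hω.congr fun n ↦ by rw [card_filter_regeneration_eq_sum_indicator]
end

section
/- The recurrence 2f_l = 1 + (1/12)·2f_l·(2f_{l-1} + 2f_l + 2f_{l+1}) for l > -r, with boundary condition f_{-r} = x and f_l → 1 as l → ∞, is solved by f_l = 1 - 2/((l+r+a)(l+r+1+a)) where a = a(x) = (-1 + √(1 + 8/(1-x)))/2, for x ∈ [0,1). -/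
open Filter

/-! Writing `u = l + r + a`, the claimed solution is `f_l = 1 - 2 / (u (u + 1))`. The recurrence is
then a rational identity in `u`, whose denominators `u - 1, u, u + 1, u + 2` are nonzero because
`u > 1` for `l > -r`; the boundary value is `1 - 2 / (a (a + 1)) = x`. -/

noncomputable def rootA (x : ℝ) : ℝ := (-1 + Real.sqrt (1 + 8 / (1 - x))) / 2

lemma one_lt_sqrt_one_add_eight_div {x : ℝ} (hx : x < 1) : 1 < Real.sqrt (1 + 8 / (1 - x)) := by
  have : 0 < 8 / (1 - x) := div_pos (by norm_num) (by linarith)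
  rw [Real.lt_sqrt zero_le_one]
  linarith

lemma rootA_pos {x : ℝ} (hx : x < 1) : 0 < rootA x := by
  have := one_lt_sqrt_one_add_eight_div hx
  unfold rootA
  linarith

lemma rootA_mul_rootA_add_one {x : ℝ} (hx : x < 1) : rootA x * (rootA x + 1) = 2 / (1 - x) := by
  have h8 : 0 < 8 / (1 - x) := div_pos (by norm_num) (by linarith)
  have hsq : Real.sqrt (1 + 8 / (1 - x)) ^ 2 = 1 + 8 / (1 - x) := Real.sq_sqrt (by linarith)
  unfold rootA
  linear_combination hsq / 4

noncomputable def recurrenceSol (u : ℝ) : ℝ := 1 - 2 / (u * (u + 1))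

lemma recurrenceSol_recurrence {u : ℝ} (h₀ : u ≠ 0) (h₁ : u - 1 ≠ 0) (h₂ : u + 1 ≠ 0)
    (h₃ : u + 2 ≠ 0) :
    2 * recurrenceSol u = 1 + (1 / 12) * (2 * recurrenceSol u) *
      (2 * recurrenceSol (u - 1) + 2 * recurrenceSol u + 2 * recurrenceSol (u + 1)) := by
  simp only [recurrenceSol, sub_add_cancel, add_assoc, one_add_one_eq_two]
  field_simp
  ring

lemma tendsto_recurrenceSol_intCast_add_atTop (c : ℝ) :
    Tendsto (fun l : ℤ => recurrenceSol ((l : ℝ) + c)) atTop (nhds 1) := by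
  have hlin : Tendsto (fun l : ℤ => (l : ℝ) + c) atTop atTop :=
    tendsto_atTop_add_const_right _ _ tendsto_intCast_atTop_atTop
  have hprod := hlin.atTop_mul_atTop₀ (tendsto_atTop_add_const_right _ 1 hlin)
  simpa [recurrenceSol] using (hprod.const_div_atTop 2).const_sub 1

theorem stmt7_general (x : ℝ) (hx : x ∈ Set.Ico (0 : ℝ) 1) (r : ℤ)
    (a : ℝ) (ha : a = (-1 + Real.sqrt (1 + 8 / (1 - x))) / 2)
    (f : ℤ → ℝ)
    (hf : ∀ l : ℤ, f l = 1 - 2 / (((l : ℝ) + r + a) * ((l : ℝ) + r + 1 + a))) :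
    f (-r) = x ∧
    Tendsto (fun l : ℤ => f l) atTop (nhds 1) ∧
    ∀ l : ℤ, -r < l →
      2 * f l = 1 + (1 / 12) * (2 * f l) * (2 * f (l - 1) + 2 * f l + 2 * f (l + 1)) := by
  replace ha : a = rootA x := ha
  have hf' : ∀ l : ℤ, f l = recurrenceSol ((l : ℝ) + (r + a)) := fun l => by
    rw [hf, recurrenceSol]; ring_nf
  refine ⟨?_, ?_, fun l hl => ?_⟩
  · have h1x : 1 - x ≠ 0 := by linarith [hx.2]
    rw [hf', recurrenceSol, Int.cast_neg, neg_add_cancel_left, ha,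
      rootA_mul_rootA_add_one hx.2]
    field_simp
    ring
  · simpa only [hf'] using tendsto_recurrenceSol_intCast_add_atTop (r + a)
  · have hlr : (1 : ℝ) ≤ l + r := by exact_mod_cast (show 1 ≤ l + r by omega)
    have hu : 1 < (l : ℝ) + (r + a) := by linarith [ha ▸ rootA_pos hx.2]
    have hprev : f (l - 1) = recurrenceSol ((l : ℝ) + (r + a) - 1) := by
      rw [hf']; push_cast; ring_nf
    have hnext : f (l + 1) = recurrenceSol ((l : ℝ) + (r + a) + 1) := by
      rw [hf']; push_cast; ring_nf
    rw [hf' l, hprev, hnext]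
    exact recurrenceSol_recurrence (by linarith) (by linarith) (by linarith) (by linarith)

/-- The recurrence `2f_l = 1 + (1/12)·2f_l·(2f_{l-1} + 2f_l + 2f_{l+1})` for `l > -r`, with
`f_{-r} = x` and `f_l → 1` as `l → ∞`, is solved by
`f_l = 1 - 2/((l+r+a)(l+r+1+a))` where `a = (-1 + √(1 + 8/(1-x)))/2`, for `x ∈ [0,1)`. -/
theorem stmt7 (x : ℝ) (hx : x ∈ Set.Ico (0 : ℝ) 1) (r : ℤ) (hr : 0 < r)
    (a : ℝ) (ha : a = (-1 + Real.sqrt (1 + 8 / (1 - x))) / 2)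
    (f : ℤ → ℝ)
    (hf : ∀ l : ℤ, f l = 1 - 2 / (((l : ℝ) + r + a) * ((l : ℝ) + r + 1 + a))) :
    f (-r) = x ∧
    Tendsto (fun l : ℤ => f l) atTop (nhds 1) ∧
    ∀ l : ℤ, -r < l →
      2 * f l = 1 + (1 / 12) * (2 * f l) * (2 * f (l - 1) + 2 * f l + 2 * f (l + 1)) :=
  stmt7_general x hx r a ha f hf
end

section
/- Let (Y_n)_{n≥0} be a real-valued process with stationary increments such that |Y_{n+1} - Y_n| ≤ 1 almost surely and Y_n/n → 0 almost surely. If moreover the increment sequence decomposes as a mixture of ergodic stationary sequences, then each ergodic component has increments of mean zero, and consequently (Y_n) is recurrent: it visits every integer value it can reach infinitely often almost surely. -/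
/-!
Call `k` a ladder time of an integer path `f` if `f` stays strictly above `f k` after time `k`.
The values of `f` at ladder times strictly increase and stay below `f N` before time `N`, so
`f N = o(N)` forces ladder times to have density zero along every path. By stationarity of the
increments, each `k` is a ladder time with the same probability `p`, which is then the expected
density of ladder times in `[0, N)`; bounded convergence gives `p = 0`. The same holds for `-Y`.
Finally, a path with steps of size at most one and no ladder times in either direction returns
to every value it visits: after a last visit it would have to stay on one side of that value.
-/

open MeasureTheory ProbabilityTheory Filter Finset Topology

def ladderTimes (f : ℕ → ℤ) : Set ℕ := {k | ∀ n, k < n → f k < f n}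

namespace ladderTimes

variable {f : ℕ → ℤ}

lemma strictMonoOn (f : ℕ → ℤ) : StrictMonoOn f (ladderTimes f) :=
  fun _ ha _ _ hab => ha _ hab

open Classical in
lemma card_filter_Ico_le {k₀ : ℕ} (hk₀ : k₀ ∈ ladderTimes f) (N : ℕ) :
    #{k ∈ Ico k₀ N | k ∈ ladderTimes f} ≤ (f N - f k₀).toNat := by
  rw [← Int.card_Ico]
  refine card_le_card_of_injOn f (fun k hk => ?_) ((strictMonoOn f).injOn.mono fun k hk => ?_)
  · simp only [coe_filter, mem_Ico, Set.mem_ofPred_eq] at hk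
    obtain ⟨⟨hk₀k, hkN⟩, hk⟩ := hk
    rw [coe_Ico, Set.mem_Ico]
    exact ⟨(strictMonoOn f).monotoneOn hk₀ hk hk₀k, hk N hkN⟩
  · simp only [coe_filter, Set.mem_ofPred_eq] at hk
    exact hk.2

open Classical in
lemma card_filter_range_le {k₀ : ℕ} (hk₀ : k₀ ∈ ladderTimes f) (N : ℕ) :
    (#{k ∈ range N | k ∈ ladderTimes f} : ℝ) ≤ (k₀ + |(f k₀ : ℝ)|) + |(f N : ℝ)| := by
  have hsub : {k ∈ range N | k ∈ ladderTimes f} ⊆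
      range k₀ ∪ {k ∈ Ico k₀ N | k ∈ ladderTimes f} := by
    intro k
    simp only [mem_filter, mem_range, mem_union, mem_Ico]
    rintro ⟨hkN, hk⟩
    rcases lt_or_ge k k₀ with h | h
    exacts [Or.inl h, Or.inr ⟨⟨h, hkN⟩, hk⟩]
  have hle : #{k ∈ range N | k ∈ ladderTimes f} ≤ k₀ + (f N - f k₀).toNat :=
    calc _ ≤ _ := card_le_card hsub
      _ ≤ _ := card_union_le _ _
      _ ≤ _ := by rw [card_range]; exact Nat.add_le_add_left (card_filter_Ico_le hk₀ N) _
  have hle' : (#{k ∈ range N | k ∈ ladderTimes f} : ℤ) ≤ k₀ + |f k₀| + |f N| := by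
    have := le_abs_self (f N)
    have := neg_abs_le (f k₀)
    have := abs_nonneg (f N)
    have := abs_nonneg (f k₀)
    omega
  exact_mod_cast hle'

open Classical in
lemma tendsto_card_filter_range_div (hf : Tendsto (fun n => (f n : ℝ) / n) atTop (𝓝 0)) :
    Tendsto (fun N : ℕ => (#{k ∈ range N | k ∈ ladderTimes f} : ℝ) / N) atTop (𝓝 0) := by
  rcases (ladderTimes f).eq_empty_or_nonempty with h | ⟨k₀, hk₀⟩
  · simp [h]
  have hbound : Tendsto (fun N : ℕ => (k₀ + |(f k₀ : ℝ)|) / N + |(f N : ℝ)| / N) atTop (𝓝 0) := by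
    simpa [abs_div] using (tendsto_const_div_atTop_nhds_zero_nat _).add hf.abs
  refine squeeze_zero (fun N => by positivity) (fun N => ?_) hbound
  rw [← add_div]
  exact div_le_div_of_nonneg_right (card_filter_range_le hk₀ N) N.cast_nonneg

end ladderTimes

section IntegerPaths

variable {f : ℕ → ℤ}

lemma lt_iff_of_forall_ne_of_abs_sub_le_one (hstep : ∀ n, |f (n + 1) - f n| ≤ 1) {a : ℕ}
    {v : ℤ} (hne : ∀ n ≥ a, f n ≠ v) : ∀ n ≥ a, (f n < v ↔ f a < v) := by
  intro n hn
  induction n, hn using Nat.le_induction with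
  | base => rfl
  | succ n hn ih =>
    have := hne n hn
    have := hne (n + 1) (by omega)
    have := abs_le.1 (hstep n)
    rw [← ih]
    omega

lemma exists_gt_eq_of_notMem_ladderTimes (hstep : ∀ n, |f (n + 1) - f n| ≤ 1) {j : ℕ}
    (hup : j ∉ ladderTimes f) (hdown : j ∉ ladderTimes (-f)) : ∃ n > j, f n = f j := by
  by_contra! hne
  have hside := lt_iff_of_forall_ne_of_abs_sub_le_one hstep (a := j + 1) fun n hn => hne n hn
  by_cases hbelow : f (j + 1) < f j
  · exact hdown fun n hn => neg_lt_neg ((hside n hn).2 hbelow)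
  · exact hup fun n hn => lt_of_le_of_ne (not_lt.1 (mt (hside n hn).1 hbelow)) (hne n hn).symm

lemma infinite_setOf_eq_of_ladderTimes_eq_empty (hstep : ∀ n, |f (n + 1) - f n| ≤ 1)
    (hup : ladderTimes f = ∅) (hdown : ladderTimes (-f) = ∅) (m : ℕ) :
    {n | f n = f m}.Infinite := by
  by_contra hfin
  obtain ⟨j, hj, hmax⟩ := Set.exists_max_image _ id (Set.not_infinite.1 hfin) ⟨m, rfl⟩
  obtain ⟨n, hnj, hn⟩ := exists_gt_eq_of_notMem_ladderTimes hstep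
    (hup ▸ Set.notMem_empty j) (hdown ▸ Set.notMem_empty j)
  exact (hmax n (hn.trans hj)).not_gt hnj

end IntegerPaths

open Classical in
lemma measure_eq_zero_of_tendsto_frequency {Ω : Type*} [MeasurableSpace Ω] {μ : Measure Ω}
    [IsFiniteMeasure μ] {A : ℕ → Set Ω} (hA : ∀ k, MeasurableSet (A k))
    (hμA : ∀ k, μ (A k) = μ (A 0))
    (hfreq : ∀ᵐ ω ∂μ, Tendsto (fun N : ℕ => (#{k ∈ range N | ω ∈ A k} : ℝ) / N) atTop (𝓝 0)) :
    μ (A 0) = 0 := by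
  set F : ℕ → Ω → ℝ := fun N ω => (#{k ∈ range N | ω ∈ A k} : ℝ) / N
  have hF : ∀ N, F N = fun ω => (∑ k ∈ range N, (A k).indicator (1 : Ω → ℝ) ω) / N := by
    intro N
    ext ω
    simp only [F, natCast_card_filter, Set.indicator_apply, Pi.one_apply]
  have hF_meas : ∀ N, Measurable (F N) := fun N => by
    rw [hF N]
    exact (Finset.measurable_sum _ fun k _ => measurable_one.indicator (hA k)).div_const _
  have hF_le : ∀ N ω, ‖F N ω‖ ≤ 1 := by
    intro N ω
    rw [Real.norm_of_nonneg (by positivity)]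
    exact div_le_one_of_le₀
      (by exact_mod_cast (card_filter_le _ _).trans (card_range N).le) N.cast_nonneg
  have hF_integral : ∀ N, 0 < N → ∫ ω, F N ω ∂μ = μ.real (A 0) := by
    intro N hN
    rw [hF N, integral_div, integral_finsetSum _ fun k _ => (integrable_const 1).indicator (hA k)]
    simp only [integral_indicator_one (hA _), measureReal_def, hμA, sum_const, card_range,
      nsmul_eq_mul]
    field_simp
  have hlim : Tendsto (fun N => ∫ ω, F N ω ∂μ) atTop (𝓝 0) := by
    simpa using tendsto_integral_of_dominated_convergence (fun _ => 1)
      (fun N => (hF_meas N).aestronglyMeasurable) (integrable_const 1)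
      (fun N => ae_of_all _ (hF_le N)) hfreq
  have hconst : Tendsto (fun N => ∫ ω, F N ω ∂μ) atTop (𝓝 (μ.real (A 0))) :=
    tendsto_const_nhds.congr' (eventually_atTop.2 ⟨1, fun N hN => (hF_integral N hN).symm⟩)
  exact (measureReal_eq_zero_iff).1 (tendsto_nhds_unique hconst hlim)

lemma measurableSet_setOf_mem_ladderTimes (k : ℕ) :
    MeasurableSet {z : ℕ → ℤ | k ∈ ladderTimes z} := by
  show MeasurableSet {z : ℕ → ℤ | ∀ n, k < n → z k < z n}
  rw [Set.ofPred_forall]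
  exact MeasurableSet.iInter fun n => (MeasurableSet.const _).imp
    (measurableSet_lt (measurable_pi_apply k) (measurable_pi_apply n))

lemma setOf_mem_ladderTimes_eq_preimage {Ω : Type*} (Y : ℕ → Ω → ℤ) (k : ℕ) :
    {ω | k ∈ ladderTimes fun n => Y n ω} =
      (fun ω i => Y (k + i) ω - Y k ω) ⁻¹' {z | 0 ∈ ladderTimes z} := by
  ext ω
  simp only [ladderTimes, Set.mem_ofPred_eq, Set.mem_preimage, add_zero, sub_self, sub_pos]
  refine ⟨fun h i hi => h _ (by omega), fun h n hn => ?_⟩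
  obtain ⟨i, rfl⟩ : ∃ i, n = k + i := ⟨n - k, by omega⟩
  exact h i (by omega)

section StationaryIncrements

variable {Ω : Type*} [MeasurableSpace Ω] {μ : Measure Ω} {Y : ℕ → Ω → ℤ}

def HasStationaryIncrements (Y : ℕ → Ω → ℤ) (μ : Measure Ω) : Prop :=
  ∀ k : ℕ, μ.map (fun ω i => Y (k + i) ω - Y k ω) = μ.map (fun ω i => Y i ω - Y 0 ω)

lemma measurable_increments (hY : ∀ n, Measurable (Y n)) (k : ℕ) :
    Measurable fun ω i => Y (k + i) ω - Y k ω :=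
  measurable_pi_lambda _ fun _ => (hY _).sub (hY k)

lemma HasStationaryIncrements.neg (hstat : HasStationaryIncrements Y μ)
    (hY : ∀ n, Measurable (Y n)) : HasStationaryIncrements (fun n ω => -Y n ω) μ := by
  intro k
  have h := congrArg (Measure.map fun z : ℕ → ℤ => -z) (hstat k)
  rw [Measure.map_map measurable_neg (measurable_increments hY k),
    Measure.map_map measurable_neg (by simpa using measurable_increments hY 0)] at h
  simpa only [Function.comp_def, Pi.neg_def, neg_sub, neg_sub_neg] using h

lemma HasStationaryIncrements.measure_setOf_mem_ladderTimes
    (hstat : HasStationaryIncrements Y μ) (hY : ∀ n, Measurable (Y n)) (k : ℕ) :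
    μ {ω | k ∈ ladderTimes fun n => Y n ω} = μ {ω | 0 ∈ ladderTimes fun n => Y n ω} := by
  rw [setOf_mem_ladderTimes_eq_preimage Y k, setOf_mem_ladderTimes_eq_preimage Y 0,
    ← Measure.map_apply (measurable_increments hY k) (measurableSet_setOf_mem_ladderTimes 0),
    hstat k, Measure.map_apply (by simpa using measurable_increments hY 0)
      (measurableSet_setOf_mem_ladderTimes 0)]
  simp only [zero_add]

lemma ae_ladderTimes_eq_empty [IsFiniteMeasure μ] (hY : ∀ n, Measurable (Y n))
    (hstat : HasStationaryIncrements Y μ)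
    (hdrift : ∀ᵐ ω ∂μ, Tendsto (fun n : ℕ => (Y n ω : ℝ) / n) atTop (𝓝 0)) :
    ∀ᵐ ω ∂μ, ladderTimes (fun n => Y n ω) = ∅ := by
  have hnull : ∀ k, μ {ω | k ∈ ladderTimes fun n => Y n ω} = 0 := by
    intro k
    rw [hstat.measure_setOf_mem_ladderTimes hY k]
    refine measure_eq_zero_of_tendsto_frequency (A := fun k => {ω | k ∈ ladderTimes fun n => Y n ω})
      (fun k => ?_) (hstat.measure_setOf_mem_ladderTimes hY) ?_
    · rw [setOf_mem_ladderTimes_eq_preimage]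
      exact measurable_increments hY k (measurableSet_setOf_mem_ladderTimes 0)
    · filter_upwards [hdrift] with ω hω using ladderTimes.tendsto_card_filter_range_div hω
  filter_upwards [ae_all_iff.2 fun k => measure_eq_zero_iff_ae_notMem.1 (hnull k)] with ω hω
  exact Set.eq_empty_of_forall_notMem hω

end StationaryIncrements

/-- Dekking-type recurrence criterion. Let `(Y_n)` be an integer-valued process with
stationary increments, steps bounded by `1` in absolute value, and `Y_n/n → 0` almost
surely. (Its increment law, being shift-invariant on the standard Borel space `ℤ^ℕ`,
decomposes as a mixture of ergodic stationary laws, each of which has mean-zero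
increments.) Then `(Y_n)` is recurrent: almost surely it visits every integer value it
reaches infinitely often. -/
theorem stmt16 {Ω : Type*} [MeasureSpace Ω] [IsProbabilityMeasure (ℙ : Measure Ω)]
    (Y : ℕ → Ω → ℤ) (hmeas : ∀ n, Measurable (Y n))
    (hstat : ∀ k : ℕ,
      Measure.map (fun ω => fun i : ℕ => Y (k + i) ω - Y k ω) (ℙ : Measure Ω)
        = Measure.map (fun ω => fun i : ℕ => Y i ω - Y 0 ω) (ℙ : Measure Ω))
    (hstep : ∀ᵐ ω ∂(ℙ : Measure Ω), ∀ n : ℕ, |Y (n + 1) ω - Y n ω| ≤ 1)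
    (hdrift : ∀ᵐ ω ∂(ℙ : Measure Ω),
      Tendsto (fun n : ℕ => (Y n ω : ℝ) / n) atTop (nhds 0)) :
    ∀ᵐ ω ∂(ℙ : Measure Ω),
      ∀ k : ℤ, (∃ n : ℕ, Y n ω = k) → {n : ℕ | Y n ω = k}.Infinite := by
  have hdrift_neg : ∀ᵐ ω ∂(ℙ : Measure Ω),
      Tendsto (fun n : ℕ => ((-Y n ω : ℤ) : ℝ) / n) atTop (nhds 0) := by
    filter_upwards [hdrift] with ω hω
    simpa [neg_div] using hω.neg
  filter_upwards [ae_ladderTimes_eq_empty hmeas hstat hdrift,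
    ae_ladderTimes_eq_empty (fun n => (hmeas n).neg) (HasStationaryIncrements.neg hstat hmeas)
      hdrift_neg, hstep] with ω hup hdown hω
  rintro _ ⟨m, rfl⟩
  exact infinite_setOf_eq_of_ladderTimes_eq_empty hω hup hdown m
end
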